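/- arXiv:2305.13446 — 6 statements merged into one kernel-verified Lean document; each statement's English description precedes it below -/
import Mathlib

section
/- If G is a connected graph containing a p-preferred node, then the power domination number of G is 1. -/
variable {V : Type*}

/-- Closed neighborhood of a set `A`: vertices in `A` or adjacent to a vertex of `A`
(the result of the domination step). -/
def closedNbhd (G : SimpleGraph V) (A : Set V) : Set V :=
  {w | ∃ v ∈ A, w = v ∨ G.Adj v w}

/-- One zero forcing step: an observed vertex `u` with exactly one unobserved neighbor `w`
forces `w`, enlarging the observed set `S` to `insert w S`. -/
def ForceStep (G : SimpleGraph V) (S T : Set V) : Prop :=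
  ∃ u w, u ∈ S ∧ w ∉ S ∧ G.Adj u w ∧ (∀ x, G.Adj u x → x ∉ S → x = w) ∧ T = insert w S

/-- `Observes G A O` : starting from the closed neighborhood of `A`, some sequence of
zero forcing steps yields observed set `O`. -/
def Observes (G : SimpleGraph V) (A O : Set V) : Prop :=
  Relation.ReflTransGen (ForceStep G) (closedNbhd G A) O

/-- No further zero forcing step applies from `O`. -/
def Stalled (G : SimpleGraph V) (O : Set V) : Prop := ∀ T, ¬ ForceStep G O T

/-- `A` is a power dominating set: the process observes every vertex. -/
def IsPDS (G : SimpleGraph V) (A : Set V) : Prop := Observes G A Set.univ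

/-- The power domination number: minimum size of a power dominating set. -/
noncomputable def pdn (G : SimpleGraph V) [Fintype V] : ℕ :=
  sInf {n | ∃ A : Finset V, IsPDS G (↑A : Set V) ∧ A.card = n}

/-- A fort: a nonempty set such that no outside vertex has exactly one neighbor in it. -/
def IsFort (G : SimpleGraph V) (F : Set V) : Prop :=
  F.Nonempty ∧ ∀ u ∉ F, ¬ ∃! w, w ∈ F ∧ G.Adj u w

/-- A terminal fort with cut vertex `v`: a fort whose only external neighbor is `v`. -/
def IsTerminalFort (G : SimpleGraph V) (v : V) (F : Set V) : Prop :=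
  IsFort G F ∧ v ∉ F ∧ ∀ u ∉ F, (∃ w ∈ F, G.Adj u w) → u = v

/-- `v` is f-preferred with terminal fort `F`: the process with input `{v}` observes all of `F`. -/
def FPreferred (G : SimpleGraph V) (v : V) (F : Set V) : Prop :=
  IsTerminalFort G v F ∧ ∃ O, Observes G {v} O ∧ F ⊆ O

/-- `v` is p-preferred: f-preferred with a terminal fort containing another f-preferred vertex. -/
def PPreferred (G : SimpleGraph V) (v : V) : Prop :=
  ∃ F, FPreferred G v F ∧ ∃ w ∈ F, w ≠ v ∧ ∃ F', FPreferred G w F'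

/-!
Let `F` be the terminal fort of `v`, observed from `v`, and let `w ∈ F` be f-preferred with
terminal fort `F'`. The closed neighbourhood of `w` lies in `F ∪ {v}`, which is already observed
from `v`, so by monotonicity of zero forcing the process from `v` also observes `F'`.
Moreover `v ∈ F'`: otherwise the closed neighbourhood of `v` misses the fort `F'`, so the process
from `v` never enters `F'`, and then `F' \ F` is a nonempty set closed under adjacency that
misses `v`. Hence `F ∪ F' ∪ {v}` is closed under adjacency, so it is everything and `{v}` is a
power dominating set; the empty set observes nothing.
-/

open Relation

variable {G : SimpleGraph V}

theorem SimpleGraph.Preconnected.eq_univ_of_adj_closed (hG : G.Preconnected) {S : Set V}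
    (hne : S.Nonempty) (hS : ∀ a ∈ S, ∀ b, G.Adj a b → b ∈ S) : S = Set.univ := by
  obtain ⟨a, ha⟩ := hne
  refine Set.eq_univ_of_forall fun b => by_contra fun hb => ?_
  obtain ⟨p⟩ := hG a b
  obtain ⟨d, -, hd, hd'⟩ := p.exists_boundary_dart S ha hb
  exact hd' (hS _ hd _ d.adj)

theorem subset_of_forceSteps {S T : Set V} (h : ReflTransGen (ForceStep G) S T) : S ⊆ T := by
  induction h with
  | refl => exact subset_rfl
  | tail _ hstep ih =>
    obtain ⟨u, x, -, -, -, -, rfl⟩ := hstep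
    exact ih.trans (Set.subset_insert _ _)

theorem exists_forceSteps_of_subset {S S' T : Set V} (hss : S ⊆ S')
    (h : ReflTransGen (ForceStep G) S T) :
    ∃ T', T ⊆ T' ∧ ReflTransGen (ForceStep G) S' T' := by
  induction h with
  | refl => exact ⟨S', hss, .refl⟩
  | tail _ hstep ih =>
    obtain ⟨T', hTT', hT'⟩ := ih
    obtain ⟨u, x, hu, -, hadj, huniq, rfl⟩ := hstep
    by_cases hx : x ∈ T'
    · exact ⟨T', Set.insert_subset hx hTT', hT'⟩
    · exact ⟨insert x T', Set.insert_subset_insert hTT', hT'.tail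
        ⟨u, x, hTT' hu, hx, hadj, fun z hz hzT => huniq z hz (fun hzS => hzT (hTT' hzS)), rfl⟩⟩

theorem IsFort.disjoint_of_forceSteps {F S T : Set V} (hF : IsFort G F) (hS : Disjoint S F)
    (h : ReflTransGen (ForceStep G) S T) : Disjoint T F := by
  induction h with
  | refl => exact hS
  | tail _ hstep ih =>
    obtain ⟨u, x, hu, -, hadj, huniq, rfl⟩ := hstep
    refine Set.disjoint_insert_left.mpr ⟨fun hxF => hF.2 u (ih.notMem_of_mem_left hu) ?_, ih⟩
    exact ⟨x, ⟨hxF, hadj⟩, fun z hz => huniq z hz.2 (ih.notMem_of_mem_right hz.1)⟩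

theorem not_isPDS_empty [Nonempty V] : ¬ IsPDS G ∅ := by
  intro h
  have hN : closedNbhd G ∅ = ∅ := by simp [closedNbhd]
  rw [IsPDS, Observes, hN] at h
  rcases h.cases_head with h | ⟨_, ⟨u, -, hu, -⟩, -⟩
  · exact Set.empty_ne_univ h
  · exact hu

theorem pdn_eq_one_of_isPDS_singleton [Fintype V] {v : V} (hv : IsPDS G {v}) : pdn G = 1 := by
  have : Nonempty V := ⟨v⟩
  have h1 : 1 ∈ {n | ∃ A : Finset V, IsPDS G (↑A : Set V) ∧ A.card = n} :=
    ⟨{v}, by rwa [Finset.coe_singleton], Finset.card_singleton v⟩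
  refine le_antisymm (Nat.sInf_le h1) (le_csInf ⟨1, h1⟩ ?_)
  rintro n ⟨A, hA, rfl⟩
  refine Nat.one_le_iff_ne_zero.mpr fun h0 => not_isPDS_empty (G := G) ?_
  rwa [Finset.card_eq_zero.mp h0, Finset.coe_empty] at hA

theorem mem_closedNbhd_singleton (v : V) : v ∈ closedNbhd G {v} := ⟨v, rfl, .inl rfl⟩

namespace IsTerminalFort

variable {v : V} {F : Set V}

theorem mem_or_eq_of_adj (hF : IsTerminalFort G v F) {a b : V} (ha : a ∈ F) (hab : G.Adj a b) :
    b ∈ F ∨ b = v :=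
  or_iff_not_imp_left.mpr fun hb => hF.2.2 b hb ⟨a, ha, hab.symm⟩

theorem closedNbhd_singleton_subset (hF : IsTerminalFort G v F) {w : V} (hw : w ∈ F) :
    closedNbhd G {w} ⊆ insert v F := by
  rintro x ⟨_, rfl, rfl | hadj⟩
  · exact Or.inr hw
  · exact (hF.mem_or_eq_of_adj hw hadj).symm

theorem insert_union_eq_univ (hG : G.Preconnected) (hF : IsTerminalFort G v F) {w : V}
    (hw : w ∈ F) {F' : Set V} (hF' : IsTerminalFort G w F') (hv : v ∈ F') :
    insert v (F ∪ F') = Set.univ := by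
  refine hG.eq_univ_of_adj_closed ⟨v, Set.mem_insert _ _⟩ ?_
  have hF'closed : ∀ a ∈ F', ∀ b, G.Adj a b → b ∈ insert v (F ∪ F') := fun a ha b hab =>
    (hF'.mem_or_eq_of_adj ha hab).elim (fun hb => .inr (.inr hb)) fun hb => .inr (.inl (hb ▸ hw))
  rintro a (rfl | ha | ha) b hab
  · exact hF'closed a hv b hab
  · exact (hF.mem_or_eq_of_adj ha hab).elim (fun hb => .inr (.inl hb)) .inl
  · exact hF'closed a ha b hab

end IsTerminalFort

theorem FPreferred.mem_of_isTerminalFort (hG : G.Preconnected) {v : V} {F : Set V}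
    (hF : FPreferred G v F) {w : V} (hw : w ∈ F) {F' : Set V} (hF' : IsTerminalFort G w F') :
    v ∈ F' := by
  obtain ⟨hFt, O, hO, hFO⟩ := hF
  by_contra hvF'
  have hstart : Disjoint (closedNbhd G {v}) F' := by
    refine Set.disjoint_left.mpr ?_
    rintro x ⟨_, rfl, rfl | hadj⟩ hx
    · exact hvF' hx
    · exact hFt.2.1 (hF'.2.2 _ hvF' ⟨x, hx, hadj⟩ ▸ hw)
  have hOF' := hF'.1.disjoint_of_forceSteps hstart hO
  have hne : (F' \ F).Nonempty := by
    obtain ⟨y, hy⟩ := hF'.1.1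
    exact ⟨y, hy, fun hyF => hOF'.notMem_of_mem_left (hFO hyF) hy⟩
  have hclosed : ∀ a ∈ F' \ F, ∀ b, G.Adj a b → b ∈ F' \ F := by
    rintro a ⟨haF', haF⟩ b hab
    have hbF : b ∉ F := fun hbF => hvF' (hFt.2.2 a haF ⟨b, hbF, hab⟩ ▸ haF')
    rcases hF'.mem_or_eq_of_adj haF' hab with hbF' | rfl
    · exact ⟨hbF', hbF⟩
    · exact absurd hw hbF
  exact hvF' ((hG.eq_univ_of_adj_closed hne hclosed).symm ▸ Set.mem_univ v).1

theorem PPreferred.isPDS_singleton (hG : G.Preconnected) {v : V} (hv : PPreferred G v) :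
    IsPDS G {v} := by
  obtain ⟨F, hF, w, hw, -, F', hF', O', hO', hF'O'⟩ := hv
  obtain ⟨O, hO, hFO⟩ := hF.2
  have hvFO : insert v F ⊆ O :=
    Set.insert_subset (subset_of_forceSteps hO (mem_closedNbhd_singleton v)) hFO
  obtain ⟨T, hO'T, hOT⟩ :=
    exists_forceSteps_of_subset ((hF.1.closedNbhd_singleton_subset hw).trans hvFO) hO'
  have hOT' := subset_of_forceSteps hOT
  have hcover : insert v (F ∪ F') ⊆ T :=
    Set.insert_subset (hOT' (hvFO (Set.mem_insert v F)))
      (Set.union_subset (hFO.trans hOT') (hF'O'.trans hO'T))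
  have hT : T = Set.univ := by
    rwa [hF.1.insert_union_eq_univ hG hw hF' (hF.mem_of_isTerminalFort hG hw hF'),
      Set.univ_subset_iff] at hcover
  rw [IsPDS, ← hT]
  exact hO.trans hOT

/-- If a connected graph contains a p-preferred node, its power domination number is 1. -/
theorem stmt_0 {V : Type*} [Fintype V] (G : SimpleGraph V) (hc : G.Connected)
    (v : V) (hv : PPreferred G v) : pdn G = 1 :=
  pdn_eq_one_of_isPDS_singleton (hv.isPDS_singleton hc.preconnected)
end

section
/- If G is a connected graph that contains at least one vertex of degree at least 3, then there exists a minimum power dominating set of G consisting only of vertices of degree at least 3. -/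
variable {V : Type*}

/-!
A vertex `v` of degree at most two in a power dominating set can be exchanged for a neighbour `u`:
once `u` and its neighbours are observed, `v` is observed and has at most one unobserved
neighbour, so it forces that neighbour and everything `v` dominated gets observed anyway.
Fixing a vertex `t` of degree at least three and choosing, among the minimum power dominating
sets, one with least total distance to `t`, every exchange towards `t` would lower that total;
hence this set has no vertex of degree at most two.
-/

namespace SimpleGraph

lemma eq_or_eq_of_degree_le_two (G : SimpleGraph V) {v : V} [Fintype (G.neighborSet v)]
    {u x y : V} (hdeg : G.degree v ≤ 2) (hu : G.Adj v u) (hx : G.Adj v x) (hy : G.Adj v y)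
    (hxu : x ≠ u) : y = u ∨ y = x := by
  classical
  by_contra! hne
  have hsub : ({u, x, y} : Finset V) ⊆ G.neighborFinset v := by
    simp [Finset.insert_subset_iff, hu, hx, hy]
  have := Finset.card_le_card hsub
  rw [Finset.card_eq_three.2 ⟨u, x, y, hxu.symm, hne.1.symm, hne.2.symm, rfl⟩,
    card_neighborFinset_eq_degree] at this
  omega

theorem Connected.exists_adj_dist_lt {G : SimpleGraph V} (hc : G.Connected) {v t : V}
    (hvt : v ≠ t) : ∃ u, G.Adj v u ∧ G.dist u t < G.dist v t := by
  obtain ⟨p, hp⟩ := hc.exists_walk_length_eq_dist v t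
  cases p with
  | nil => exact absurd rfl hvt
  | cons hadj q =>
    refine ⟨_, hadj, (dist_le q).trans_lt ?_⟩
    rw [← hp, Walk.length_cons]
    omega

end SimpleGraph

lemma closedNbhd_mono (G : SimpleGraph V) {A B : Set V} (h : A ⊆ B) :
    closedNbhd G A ⊆ closedNbhd G B :=
  fun _ ⟨v, hv, hw⟩ => ⟨v, h hv, hw⟩

lemma closedNbhd_univ (G : SimpleGraph V) : closedNbhd G Set.univ = Set.univ :=
  Set.eq_univ_of_forall fun w => ⟨w, trivial, Or.inl rfl⟩

/-- The set at which zero forcing from `S` stalls, defined as the least stalled superset of `S`. -/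
def forcingClosure (G : SimpleGraph V) (S : Set V) : Set V := ⋂₀ {T | S ⊆ T ∧ Stalled G T}

lemma subset_forcingClosure (G : SimpleGraph V) (S : Set V) : S ⊆ forcingClosure G S :=
  fun _ hx => Set.mem_sInter.2 fun _ hT => hT.1 hx

lemma forcingClosure_subset (G : SimpleGraph V) {S T : Set V} (hST : S ⊆ T)
    (hT : Stalled G T) : forcingClosure G S ⊆ T :=
  fun _ hx => Set.mem_sInter.1 hx T ⟨hST, hT⟩

lemma stalled_forcingClosure (G : SimpleGraph V) (S : Set V) : Stalled G (forcingClosure G S) := by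
  rintro _ ⟨u, w, hu, hw, hadj, huniq, rfl⟩
  refine hw (Set.mem_sInter.2 fun T hT => ?_)
  by_contra hwT
  exact hT.2 _ ⟨u, w, forcingClosure_subset G hT.1 hT.2 hu, hwT, hadj,
    fun x hx hxT => huniq x hx fun hxS => hxT (forcingClosure_subset G hT.1 hT.2 hxS), rfl⟩

lemma forcingClosure_mono (G : SimpleGraph V) {S T : Set V} (h : S ⊆ T) :
    forcingClosure G S ⊆ forcingClosure G T :=
  forcingClosure_subset G (h.trans (subset_forcingClosure G T)) (stalled_forcingClosure G T)

lemma subset_forcingClosure_of_reflTransGen (G : SimpleGraph V) {S O : Set V}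
    (h : Relation.ReflTransGen (ForceStep G) S O) : O ⊆ forcingClosure G S := by
  induction h with
  | refl => exact subset_forcingClosure G S
  | tail _ hstep ih =>
    obtain ⟨u, w, hu, _, hadj, huniq, rfl⟩ := hstep
    refine Set.insert_subset (by_contra fun hw => stalled_forcingClosure G S (insert w _)
      ⟨u, w, ih hu, hw, hadj, fun y hy hyS => huniq y hy fun hyO => hyS (ih hyO), rfl⟩) ih

lemma subset_of_reflTransGen_forceStep (G : SimpleGraph V) {S O : Set V}
    (h : Relation.ReflTransGen (ForceStep G) S O) : S ⊆ O := by
  induction h with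
  | refl => exact subset_rfl
  | tail _ hstep ih =>
    obtain ⟨_, _, _, _, _, _, rfl⟩ := hstep
    exact ih.trans (Set.subset_insert _ _)

lemma exists_reflTransGen_stalled (G : SimpleGraph V) [Finite V] (S : Set V) :
    ∃ O, Relation.ReflTransGen (ForceStep G) S O ∧ Stalled G O := by
  obtain ⟨O, hO, hmax⟩ := Set.exists_max_image {O | Relation.ReflTransGen (ForceStep G) S O}
    Set.ncard (Set.toFinite _) ⟨S, .refl⟩
  refine ⟨O, hO, fun T hT => ?_⟩
  have hgrow := hmax T (hO.tail hT)
  obtain ⟨_, w, _, hw, _, _, rfl⟩ := hT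
  rw [Set.ncard_insert_of_notMem hw] at hgrow
  omega

lemma reflTransGen_forcingClosure (G : SimpleGraph V) [Finite V] (S : Set V) :
    Relation.ReflTransGen (ForceStep G) S (forcingClosure G S) := by
  obtain ⟨O, hO, hstalled⟩ := exists_reflTransGen_stalled G S
  rwa [(subset_forcingClosure_of_reflTransGen G hO).antisymm
    (forcingClosure_subset G (subset_of_reflTransGen_forceStep G hO) hstalled)] at hO

lemma isPDS_iff_forcingClosure_eq_univ (G : SimpleGraph V) [Finite V] (A : Set V) :
    IsPDS G A ↔ forcingClosure G (closedNbhd G A) = Set.univ := by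
  refine ⟨fun h => Set.eq_univ_of_univ_subset (subset_forcingClosure_of_reflTransGen G h),
    fun h => ?_⟩
  have := reflTransGen_forcingClosure G (closedNbhd G A)
  rwa [h] at this

lemma isPDS_univ (G : SimpleGraph V) : IsPDS G Set.univ := by
  rw [IsPDS, Observes, closedNbhd_univ]

lemma closedNbhd_singleton_subset_forcingClosure (G : SimpleGraph V) {u v : V}
    [Fintype (G.neighborSet v)] (hdeg : G.degree v ≤ 2) (hadj : G.Adj v u) :
    closedNbhd G {v} ⊆ forcingClosure G (closedNbhd G {u}) := by
  have hv : v ∈ closedNbhd G {u} := ⟨u, rfl, Or.inr hadj.symm⟩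
  have hu : u ∈ closedNbhd G {u} := ⟨u, rfl, Or.inl rfl⟩
  rintro x ⟨w, hw, hxw⟩
  rw [Set.mem_singleton_iff.1 hw] at hxw
  rcases hxw with rfl | hx
  · exact subset_forcingClosure G _ hv
  by_cases hxu : x = u
  · subst hxu
    exact subset_forcingClosure G _ hu
  by_contra hxS
  refine stalled_forcingClosure G _ _ ⟨v, x, subset_forcingClosure G _ hv, hxS, hx,
    fun y hy hyS => ?_, rfl⟩
  rcases G.eq_or_eq_of_degree_le_two hdeg hadj hx hy hxu with rfl | rfl
  · exact absurd (subset_forcingClosure G _ hu) hyS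
  · rfl

theorem IsPDS.insert_diff_singleton {G : SimpleGraph V} [Finite V] {A : Set V} {u v : V}
    [Fintype (G.neighborSet v)] (hA : IsPDS G A) (hdeg : G.degree v ≤ 2) (hadj : G.Adj v u) :
    IsPDS G (insert u (A \ {v})) := by
  rw [isPDS_iff_forcingClosure_eq_univ] at hA ⊢
  refine Set.eq_univ_of_univ_subset (hA ▸ forcingClosure_subset G ?_ (stalled_forcingClosure G _))
  rintro x ⟨w, hw, hxw⟩
  by_cases hwv : w = v
  · subst hwv
    exact forcingClosure_mono G (closedNbhd_mono G (by simp))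
      (closedNbhd_singleton_subset_forcingClosure G hdeg hadj ⟨w, rfl, hxw⟩)
  · exact subset_forcingClosure G _ ⟨w, Or.inr ⟨hw, hwv⟩, hxw⟩

lemma pdn_le_card {G : SimpleGraph V} [Fintype V] {A : Finset V} (hA : IsPDS G A) :
    pdn G ≤ A.card :=
  Nat.sInf_le (s := {n | ∃ A : Finset V, IsPDS G A ∧ A.card = n}) ⟨A, hA, rfl⟩

lemma exists_isPDS_card_eq_pdn (G : SimpleGraph V) [Fintype V] :
    ∃ A : Finset V, IsPDS G A ∧ A.card = pdn G :=
  Nat.sInf_mem (s := {n | ∃ A : Finset V, IsPDS G A ∧ A.card = n})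
    ⟨_, Finset.univ, by simpa using isPDS_univ G, rfl⟩

/-- A connected graph with a vertex of degree at least 3 has a minimum power dominating set
consisting only of vertices of degree at least 3. -/
theorem stmt_2 {V : Type*} [Fintype V] (G : SimpleGraph V) [DecidableRel G.Adj]
    (hc : G.Connected) (h : ∃ v : V, 3 ≤ G.degree v) :
    ∃ A : Finset V, IsPDS G (↑A : Set V) ∧ A.card = pdn G ∧ ∀ v ∈ A, 3 ≤ G.degree v := by
  classical
  obtain ⟨t, ht⟩ := h
  let minimum : Set (Finset V) := {A | IsPDS G A ∧ A.card = pdn G}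
  obtain ⟨A, ⟨hA, hcard⟩, hmin⟩ := minimum.exists_min_image (∑ x ∈ ·, G.dist x t)
    minimum.toFinite (exists_isPDS_card_eq_pdn G)
  refine ⟨A, hA, hcard, fun v hv => ?_⟩
  by_contra! hdeg
  obtain ⟨u, hadj, hcloser⟩ := hc.exists_adj_dist_lt (show v ≠ t by rintro rfl; omega)
  have hB : IsPDS G ↑(insert u (A.erase v)) := by
    simpa using hA.insert_diff_singleton (by omega) hadj
  have hApos := Finset.card_pos.2 ⟨v, hv⟩
  have hu : u ∉ A.erase v := fun hu => by
    have := pdn_le_card hB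
    rw [Finset.insert_eq_of_mem hu, Finset.card_erase_of_mem hv] at this
    omega
  have hBcard : (insert u (A.erase v)).card = pdn G := by
    rw [Finset.card_insert_of_notMem hu, Finset.card_erase_of_mem hv]
    omega
  have hsum := hmin _ ⟨hB, hBcard⟩
  rw [Finset.sum_insert hu, ← Finset.add_sum_erase A _ hv] at hsum
  omega
end

section
/- Let G be a connected graph and let P = v_1 v_2 ... v_n (n ≥ 3) be a terminal path from v_1, i.e., deg(v_i) = 2 for 2 ≤ i ≤ n−1 and deg(v_n) = 1. Let G' be the graph obtained by deleting v_3, ..., v_n (so the terminal path is contracted to the single edge v_1 v_2). Then every subset A ⊆ V(G) \ {v_2, ..., v_n} is a power dominating set of G if and only if it is a power dominating set of G'. -/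
/-!
Observation spreads along the path away from `v 0`: in either graph a path vertex `v i`
(`i ≥ 1`) is observed only after `v (i - 1)`, because `A` avoids the path and a forcing
neighbour of `v i` other than `v (i - 1)` would be `v (i + 1)`, observed only after `v i`.
Hence a forcing step of `G` that observes a vertex outside the tail `v 2, …, v (n - 1)` is a
forcing step of the contracted graph (`v 2` never forces `v 1`), and conversely every forcing
step of the contracted graph is one of `G`: the only vertex with a neighbour in the tail is
`v 1`, which cannot force there since its unique neighbour `v 0` is observed before it.
Once everything outside the tail is observed, `v 1, v 2, …` force the tail in turn.
-/

variable {V : Type*}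

open Set Relation

namespace SimpleGraph

theorem adj_iff_of_degree_eq_two {G : SimpleGraph V} {c a b : V} [Fintype (G.neighborSet c)]
    (hdeg : G.degree c = 2) (hab : a ≠ b) (ha : G.Adj c a) (hb : G.Adj c b) (x : V) :
    G.Adj c x ↔ x = a ∨ x = b := by
  classical
  have hsub : {a, b} ⊆ G.neighborFinset c := by
    simp [Finset.insert_subset_iff, ha, hb]
  have hnbr := Finset.eq_of_subset_of_card_le hsub
    (by rw [card_neighborFinset_eq_degree, hdeg, Finset.card_pair hab])
  rw [← mem_neighborFinset, ← hnbr]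
  simp

theorem adj_iff_of_degree_eq_one {G : SimpleGraph V} {c a : V} [Fintype (G.neighborSet c)]
    (hdeg : G.degree c = 1) (ha : G.Adj c a) (x : V) : G.Adj c x ↔ x = a := by
  obtain ⟨w, -, hw⟩ := degree_eq_one_iff_existsUnique_adj.mp hdeg
  exact ⟨fun hx => (hw x hx).trans (hw a ha).symm, fun hx => hx ▸ ha⟩

end SimpleGraph

section PowerDomination

variable {G : SimpleGraph V}

theorem subset_closedNbhd (A : Set V) : A ⊆ closedNbhd G A :=
  fun a ha => ⟨a, ha, Or.inl rfl⟩

theorem closedNbhd_induce {s A : Set V} (hA : A ⊆ s) :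
    closedNbhd (G.induce s) (Subtype.val ⁻¹' A) = Subtype.val ⁻¹' closedNbhd G A := by
  ext ⟨w, hw⟩
  constructor
  · rintro ⟨a, haA, h⟩
    exact ⟨a, haA, h.imp (congrArg Subtype.val) id⟩
  · rintro ⟨a, haA, h⟩
    exact ⟨⟨a, hA haA⟩, haA, h.imp Subtype.ext id⟩

theorem Observes.exists_adj_mem {A O : Set V} (hO : Observes G A O) {x : V} (hx : x ∈ O)
    (hxA : x ∉ A) : ∃ y ∈ O, G.Adj y x := by
  induction hO with
  | refl =>
    obtain ⟨a, ha, rfl | hax⟩ := hx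
    · exact absurd ha hxA
    · exact ⟨a, subset_closedNbhd A ha, hax⟩
  | tail _ hstep ih =>
    obtain ⟨u, w, hu, -, huw, -, rfl⟩ := hstep
    rcases hx with rfl | hx
    · exact ⟨u, mem_insert_of_mem _ hu, huw⟩
    · obtain ⟨y, hy, hyx⟩ := ih hx
      exact ⟨y, mem_insert_of_mem _ hy, hyx⟩

theorem reflTransGen_forceStep_insert {S : Set V} {u w : V} (hu : u ∈ S) (huw : G.Adj u w)
    (hS : ∀ x, G.Adj u x → x ≠ w → x ∈ S) : ReflTransGen (ForceStep G) S (insert w S) := by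
  by_cases hw : w ∈ S
  · rw [insert_eq_of_mem hw]
  · exact .single ⟨u, w, hu, hw, huw, fun x hx hxS => by_contra fun hne => hxS (hS x hx hne), rfl⟩

theorem ForceStep.reflTransGen_induce {s S T : Set V} (h : ForceStep G S T)
    (hS : ∀ u ∈ S, u ∉ s → ∀ w ∈ s, w ∉ S → ¬ G.Adj u w) :
    ReflTransGen (ForceStep (G.induce s)) (Subtype.val ⁻¹' S) (Subtype.val ⁻¹' T) := by
  obtain ⟨u, w, hu, hw, huw, hforce, rfl⟩ := h
  by_cases hws : w ∈ s
  · have hus : u ∈ s := by_contra fun hus => hS u hu hus w hws hw huw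
    exact .single ⟨⟨u, hus⟩, ⟨w, hws⟩, hu, hw, huw,
      fun x hx hxS => Subtype.ext (hforce x hx hxS), by ext; simp [Subtype.ext_iff]⟩
  · convert ReflTransGen.refl using 1
    ext ⟨x, hx⟩
    simp only [mem_preimage, mem_insert_iff, or_iff_right_iff_imp]
    rintro rfl
    exact absurd hx hws

theorem ForceStep.of_induce {s : Set V} {S T : Set s} (h : ForceStep (G.induce s) S T)
    (hS : ∀ u ∈ S, ∀ x ∉ s, G.Adj (u : V) x → ∀ w ∉ S, ¬ (G.induce s).Adj u w) :
    ForceStep G (Subtype.val '' S) (Subtype.val '' T) := by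
  obtain ⟨u, w, hu, hw, huw, hforce, rfl⟩ := h
  refine ⟨u, w, mem_image_of_mem _ hu, Subtype.val_injective.mem_set_image.not.mpr hw, huw,
    fun x hx hxS => ?_, image_insert_eq⟩
  have hxs : x ∈ s := by_contra fun hxs => hS u hu x hxs hx w hw huw
  exact congrArg Subtype.val (hforce ⟨x, hxs⟩ hx fun h => hxS (mem_image_of_mem _ h))

theorem Observes.induce {s A O : Set V} (hA : A ⊆ s) (hO : Observes G A O)
    (hinv : ∀ S, Observes G A S → ∀ u ∈ S, u ∉ s → ∀ w ∈ s, w ∉ S → ¬ G.Adj u w) :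
    Observes (G.induce s) (Subtype.val ⁻¹' A) (Subtype.val ⁻¹' O) := by
  induction hO with
  | refl => rw [Observes, closedNbhd_induce hA]
  | tail hab hstep ih => exact ih.trans (hstep.reflTransGen_induce (hinv _ hab))

theorem Observes.of_induce {s A : Set V} {O : Set s} (hA : closedNbhd G A ⊆ s)
    (hO : Observes (G.induce s) (Subtype.val ⁻¹' A) O)
    (hinv : ∀ S, Observes (G.induce s) (Subtype.val ⁻¹' A) S →
      ∀ u ∈ S, ∀ x ∉ s, G.Adj (u : V) x → ∀ w ∉ S, ¬ (G.induce s).Adj u w) :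
    Observes G A (Subtype.val '' O) := by
  induction hO with
  | refl =>
    rw [Observes, closedNbhd_induce ((subset_closedNbhd A).trans hA),
      image_preimage_eq_of_subset (by rwa [Subtype.range_coe])]
  | tail hab hstep ih => exact ih.tail (hstep.of_induce (hinv _ hab))

end PowerDomination

/-- `v 0` is the paper's `v_1`, so the vertices deleted by the contraction form `v '' Ico 2 n`. -/
structure IsTerminalPath (G : SimpleGraph V) [Fintype V] [DecidableRel G.Adj] (n : ℕ) (v : ℕ → V) :
    Prop where
  inj : ∀ i j, i < n → j < n → v i = v j → i = j
  adj : ∀ i, i + 1 < n → G.Adj (v i) (v (i + 1))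
  degree_eq_two : ∀ i, 1 ≤ i → i < n - 1 → G.degree (v i) = 2
  degree_eq_one : G.degree (v (n - 1)) = 1

namespace IsTerminalPath

variable {G : SimpleGraph V} [Fintype V] [DecidableRel G.Adj] {n : ℕ} {v : ℕ → V}
  (P : IsTerminalPath G n v)
include P

theorem adj_iff {i : ℕ} (h1 : 1 ≤ i) (hi : i < n) (x : V) :
    G.Adj (v i) x ↔ x = v (i - 1) ∨ i + 1 < n ∧ x = v (i + 1) := by
  have hprev : G.Adj (v i) (v (i - 1)) := by
    have := P.adj (i - 1) (by omega)
    rw [Nat.sub_add_cancel h1] at this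
    exact this.symm
  rcases lt_or_ge (i + 1) n with hlt | hge
  · have hne : v (i - 1) ≠ v (i + 1) := fun h => by
      have := P.inj _ _ (by omega) hlt h
      omega
    rw [SimpleGraph.adj_iff_of_degree_eq_two (P.degree_eq_two i h1 (by omega)) hne hprev
      (P.adj i hlt)]
    simp [hlt]
  · have hdeg : G.degree (v i) = 1 := by
      rw [show i = n - 1 by omega]
      exact P.degree_eq_one
    rw [SimpleGraph.adj_iff_of_degree_eq_one hdeg hprev]
    simp [show ¬ i + 1 < n by omega]

theorem apply_mem_tail_iff {i : ℕ} (hi : i < n) : v i ∈ v '' Ico 2 n ↔ 2 ≤ i := by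
  constructor
  · rintro ⟨j, ⟨h2, hj⟩, hji⟩
    rwa [P.inj i j hi hj hji.symm]
  · exact fun h => mem_image_of_mem v ⟨h, hi⟩

theorem eq_of_adj_tail {x y : V} (hx : x ∉ v '' Ico 2 n) (hy : y ∈ v '' Ico 2 n)
    (hxy : G.Adj x y) : x = v 1 ∧ y = v 2 ∧ 2 < n := by
  obtain ⟨j, ⟨h2, hj⟩, rfl⟩ := hy
  rcases (P.adj_iff (by omega) hj x).1 hxy.symm with rfl | ⟨hj1, rfl⟩
  · obtain rfl : j = 2 := by
      by_contra hj2
      exact hx (mem_image_of_mem v ⟨by omega, by omega⟩)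
    exact ⟨rfl, rfl, hj⟩
  · exact (hx (mem_image_of_mem v ⟨by omega, hj1⟩)).elim

theorem eq_zero_of_adj_one (hn : 1 < n) {y : V} (hy : y ∉ v '' Ico 2 n) (hadj : G.Adj (v 1) y) :
    y = v 0 := by
  rcases (P.adj_iff le_rfl hn y).1 hadj with rfl | ⟨h2, rfl⟩
  · rfl
  · exact (hy (mem_image_of_mem v ⟨le_rfl, h2⟩)).elim

theorem reflTransGen_compl_tail : ReflTransGen (ForceStep G) (v '' Ico 2 n)ᶜ univ := by
  rcases lt_or_ge n 2 with hn | hn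
  · rw [Ico_eq_empty (by omega), image_empty, compl_empty]
  have hprefix : ∀ k, 2 ≤ k → k ≤ n →
      ReflTransGen (ForceStep G) (v '' Ico 2 n)ᶜ ((v '' Ico 2 n)ᶜ ∪ v '' Ico 2 k) := by
    intro k hk
    induction k, hk using Nat.le_induction with
    | base =>
      intro _
      rw [Ico_self, image_empty, union_empty]
    | succ k hk ih =>
      intro hkn
      have hmem : ∀ j < k, v j ∈ (v '' Ico 2 n)ᶜ ∪ v '' Ico 2 k := fun j hj =>
        if h : 2 ≤ j then Or.inr (mem_image_of_mem v ⟨h, hj⟩)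
        else Or.inl ((P.apply_mem_tail_iff (by omega)).not.mpr h)
      have hstep : Ico 2 (k + 1) = insert k (Ico 2 k) := by
        ext j
        simp only [mem_Ico, mem_insert_iff]
        omega
      have hadj : G.Adj (v (k - 1)) (v k) := by
        simpa [Nat.sub_add_cancel (by omega : 1 ≤ k)] using P.adj (k - 1) (by omega)
      rw [hstep, image_insert_eq, union_insert]
      refine (ih (by omega)).trans (reflTransGen_forceStep_insert (hmem _ (by omega)) hadj ?_)
      intro x hx hxk
      rcases (P.adj_iff (by omega) (by omega) x).1 hx with rfl | ⟨-, rfl⟩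
      · exact hmem _ (by omega)
      · exact (hxk (by rw [Nat.sub_add_cancel (by omega : 1 ≤ k)])).elim
  simpa using hprefix n hn le_rfl

variable {A : Set V} (hA : ∀ i, 1 ≤ i → i < n → v i ∉ A)
include hA

theorem closedNbhd_subset : closedNbhd G A ⊆ (v '' Ico 2 n)ᶜ := by
  rintro x ⟨a, ha, rfl | hax⟩ ⟨j, ⟨h2, hj⟩, rfl⟩
  · exact hA j (by omega) hj ha
  · rcases (P.adj_iff (by omega) hj a).1 hax.symm with rfl | ⟨hj1, rfl⟩
    · exact hA (j - 1) (by omega) (by omega) ha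
    · exact hA (j + 1) (by omega) hj1 ha

theorem observes_pred_mem {O : Set V} (hO : Observes G A O) {i : ℕ} (h1 : 1 ≤ i) (hi : i < n)
    (hvi : v i ∈ O) : v (i - 1) ∈ O := by
  induction hO generalizing i with
  | refl =>
    obtain ⟨a, ha, hvia | hadj⟩ := hvi
    · exact absurd (hvia ▸ ha) (hA i h1 hi)
    · rcases (P.adj_iff h1 hi a).1 hadj.symm with rfl | ⟨hi1, rfl⟩
      · exact subset_closedNbhd A ha
      · exact absurd ha (hA (i + 1) (by omega) hi1)
  | tail _ hstep ih =>
    obtain ⟨u, w, hu, hw, huw, -, rfl⟩ := hstep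
    rcases hvi with rfl | hvi
    · rcases (P.adj_iff h1 hi u).1 huw.symm with rfl | ⟨hi1, rfl⟩
      · exact mem_insert_of_mem _ hu
      · exact absurd (by simpa using ih (by omega) hi1 hu) hw
    · exact mem_insert_of_mem _ (ih h1 hi hvi)

theorem observes_induce {O : Set V} (hO : Observes G A O) :
    Observes (G.induce (v '' Ico 2 n)ᶜ) (Subtype.val ⁻¹' A) (Subtype.val ⁻¹' O) := by
  refine hO.induce ((subset_closedNbhd A).trans (P.closedNbhd_subset hA)) ?_
  intro S hS u hu huT w hwT hwS huw
  obtain ⟨rfl, rfl, h2⟩ := P.eq_of_adj_tail hwT (not_not.mp huT) huw.symm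
  exact hwS (P.observes_pred_mem hA hS (i := 2) (by omega) h2 hu)

theorem observes_of_induce {O : Set ↥(v '' Ico 2 n)ᶜ}
    (hO : Observes (G.induce (v '' Ico 2 n)ᶜ) (Subtype.val ⁻¹' A) O) :
    Observes G A (Subtype.val '' O) := by
  refine hO.of_induce (P.closedNbhd_subset hA) ?_
  intro S hS u hu x hx hux w hwS huw
  obtain ⟨hu1, -, h2⟩ := P.eq_of_adj_tail u.2 (not_not.mp hx) hux
  have hnbr : ∀ z : ↥(v '' Ico 2 n)ᶜ, (G.induce (v '' Ico 2 n)ᶜ).Adj u z → (z : V) = v 0 :=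
    fun z hz => P.eq_zero_of_adj_one (by omega) z.2 (hu1 ▸ hz)
  obtain ⟨z, hzS, hzu⟩ := hS.exists_adj_mem hu fun h => hA 1 le_rfl (by omega) (hu1 ▸ h)
  obtain rfl : w = z := Subtype.ext ((hnbr w huw).trans (hnbr z hzu.symm).symm)
  exact hwS hzS

end IsTerminalPath

theorem stmt_3_general {V : Type*} [Fintype V] (G : SimpleGraph V) [DecidableRel G.Adj]
    (n : ℕ) (v : ℕ → V)
    (hinj : ∀ i j, i < n → j < n → v i = v j → i = j)
    (hadj : ∀ i, i + 1 < n → G.Adj (v i) (v (i + 1)))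
    (hdeg2 : ∀ i, 1 ≤ i → i < n - 1 → G.degree (v i) = 2)
    (hdeg1 : G.degree (v (n - 1)) = 1)
    (s : Set V) (hs : s = {w | ∀ i, 2 ≤ i → i < n → w ≠ v i})
    (A : Set V) (hA : ∀ i, 1 ≤ i → i < n → v i ∉ A) :
    IsPDS G A ↔ IsPDS (G.induce s) (Subtype.val ⁻¹' A) := by
  have P : IsTerminalPath G n v := ⟨hinj, hadj, hdeg2, hdeg1⟩
  obtain rfl : s = (v '' Ico 2 n)ᶜ := by
    rw [hs]
    ext w
    simp [eq_comm]
  constructor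
  · intro h
    simpa [IsPDS] using P.observes_induce hA h
  · intro h
    have hcompl := P.observes_of_induce hA h
    rw [image_univ, Subtype.range_coe] at hcompl
    exact hcompl.trans P.reflTransGen_compl_tail

/-- Contracting a terminal path $v_1 v_2 ... v_n$ to the edge $v_1 v_2$ (deleting
$v_3,...,v_n$) preserves power dominating sets avoiding $v_2,...,v_n$ (0-indexed below). -/
theorem stmt_3 {V : Type*} [Fintype V] (G : SimpleGraph V) [DecidableRel G.Adj]
    (hc : G.Connected) (n : ℕ) (hn : 3 ≤ n) (v : ℕ → V)
    (hinj : ∀ i j, i < n → j < n → v i = v j → i = j)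
    (hadj : ∀ i, i + 1 < n → G.Adj (v i) (v (i + 1)))
    (hdeg2 : ∀ i, 1 ≤ i → i < n - 1 → G.degree (v i) = 2)
    (hdeg1 : G.degree (v (n - 1)) = 1)
    (s : Set V) (hs : s = {w | ∀ i, 2 ≤ i → i < n → w ≠ v i})
    (A : Set V) (hA : ∀ i, 1 ≤ i → i < n → v i ∉ A) :
    IsPDS G A ↔ IsPDS (G.induce s) (Subtype.val ⁻¹' A) :=
  stmt_3_general G n v hinj hadj hdeg2 hdeg1 s hs A hA
end

section
/- Let G be a connected graph and F a fort of G. Then every power dominating set A of G satisfies: either A ∩ F ≠ ∅, or some vertex of A has a neighbor in F. -/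
variable {V : Type*}

/-! Observed sets avoid a fort until some vertex of the fort is dominated directly: the first
force into the fort would come from an outside vertex with exactly one neighbour in it. -/

section Fort

variable {G : SimpleGraph V} {F : Set V}

theorem IsFort.disjoint_of_forceStep (hF : IsFort G F) {S T : Set V} (hS : Disjoint S F)
    (hST : ForceStep G S T) : Disjoint T F := by
  obtain ⟨u, w, huS, -, huw, huniq, rfl⟩ := hST
  refine Set.disjoint_insert_left.2 ⟨fun hwF => hF.2 u (hS.notMem_of_mem_left huS) ?_, hS⟩
  exact ⟨w, ⟨hwF, huw⟩, fun x ⟨hxF, hux⟩ => huniq x hux (hS.notMem_of_mem_right hxF)⟩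

theorem IsFort.disjoint_of_observes (hF : IsFort G F) {A O : Set V}
    (hA : Disjoint (closedNbhd G A) F) (hO : Observes G A O) : Disjoint O F := by
  induction hO with
  | refl => exact hA
  | tail _ hST ih => exact hF.disjoint_of_forceStep ih hST

end Fort

theorem disjoint_closedNbhd_iff {G : SimpleGraph V} {A F : Set V} :
    Disjoint (closedNbhd G A) F ↔ Disjoint A F ∧ ∀ a ∈ A, ∀ w ∈ F, ¬G.Adj a w := by
  simp only [Set.disjoint_left, closedNbhd]
  constructor
  · exact fun h => ⟨fun a ha => h ⟨a, ha, .inl rfl⟩, fun a ha w hwF haw => h ⟨a, ha, .inr haw⟩ hwF⟩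
  · rintro ⟨hAF, hadj⟩ w ⟨a, ha, rfl | haw⟩ hwF
    exacts [hAF ha hwF, hadj a ha w hwF haw]

theorem stmt_6_general {V : Type*} (G : SimpleGraph V) (F A : Set V)
    (hF : IsFort G F) (hA : IsPDS G A) :
    (A ∩ F).Nonempty ∨ ∃ a ∈ A, ∃ w ∈ F, G.Adj a w := by
  by_contra! h
  obtain ⟨hAF, hadj⟩ := h
  have hF_empty : F = ∅ := Set.univ_disjoint.1 <| hF.disjoint_of_observes
    (disjoint_closedNbhd_iff.2 ⟨Set.disjoint_iff_inter_eq_empty.2 hAF, hadj⟩) hA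
  exact hF.1.ne_empty hF_empty

/-- Every power dominating set either meets a fort or has a vertex with a neighbor in the fort. -/
theorem stmt_6 {V : Type*} (G : SimpleGraph V) (hc : G.Connected) (F A : Set V)
    (hF : IsFort G F) (hA : IsPDS G A) :
    (A ∩ F).Nonempty ∨ ∃ a ∈ A, ∃ w ∈ F, G.Adj a w :=
  stmt_6_general G F A hF hA
end

section
/- Let G be a graph and F a fort of G. If S is a set of observed vertices with S ∩ F = ∅ and no vertex of F is observed, then no vertex of F ever becomes observed under the zero forcing step alone (i.e., forts block zero forcing). -/
variable {V : Type*}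

theorem IsFort.notMem_of_forces {G : SimpleGraph V} {F S : Set V} (hF : IsFort G F)
    (hS : S ∩ F = ∅) {u w : V} (hu : u ∈ S) (hadj : G.Adj u w)
    (hforce : ∀ x, G.Adj u x → x ∉ S → x = w) : w ∉ F := by
  have notMem_S : ∀ x ∈ F, x ∉ S := fun x hxF hxS => hS.subset ⟨hxS, hxF⟩
  intro hw
  -- `u` lies outside the fort, yet `w` would be its only neighbour in it.
  refine hF.2 u (fun huF => notMem_S u huF hu) ⟨w, ⟨hw, hadj⟩, ?_⟩
  rintro x ⟨hxF, hux⟩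
  exact hforce x hux (notMem_S x hxF)

theorem IsFort.inter_eq_empty_of_forceStep {G : SimpleGraph V} {F S T : Set V} (hF : IsFort G F)
    (hS : S ∩ F = ∅) (hST : ForceStep G S T) : T ∩ F = ∅ := by
  obtain ⟨u, w, hu, -, hadj, hforce, rfl⟩ := hST
  rw [Set.insert_inter_of_notMem (hF.notMem_of_forces hS hu hadj hforce), hS]

/-- Forts block zero forcing: if no vertex of a fort is observed initially, then no vertex of
the fort ever becomes observed under zero forcing steps alone. -/
theorem stmt_7 {V : Type*} (G : SimpleGraph V) (F S T : Set V) (hF : IsFort G F)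
    (hS : S ∩ F = ∅) (h : Relation.ReflTransGen (ForceStep G) S T) :
    T ∩ F = ∅ := by
  induction h with
  | refl => exact hS
  | tail _ hstep ih => exact hF.inter_eq_empty_of_forceStep ih hstep
end

section
/- If the power domination process with input set A terminates with observed set O ≠ V(G), then the set of unobserved vertices V(G) \ O is a fort of G. -/
variable {V : Type*}

theorem Stalled.not_existsUnique_unobserved_adj {G : SimpleGraph V} {O : Set V}
    (hst : Stalled G O) {u : V} (hu : u ∈ O) : ¬ ∃! w, w ∉ O ∧ G.Adj u w := by
  rintro ⟨w, ⟨hwO, hadj⟩, huniq⟩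
  exact hst (insert w O) ⟨u, w, hu, hwO, hadj, fun x hx hxO => huniq x ⟨hxO, hx⟩, rfl⟩

theorem Stalled.isFort_compl {G : SimpleGraph V} {O : Set V} (hst : Stalled G O)
    (hne : O ≠ Set.univ) : IsFort G Oᶜ := by
  refine ⟨Set.nonempty_compl.mpr hne, fun u hu => ?_⟩
  simpa only [Set.mem_compl_iff] using hst.not_existsUnique_unobserved_adj (not_not.mp hu)

theorem stmt_17_general {V : Type*} (G : SimpleGraph V) (O : Set V)
    (hst : Stalled G O) (hne : O ≠ Set.univ) :
    IsFort G (Set.univ \ O) := by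
  rw [← Set.compl_eq_univ_sdiff]
  exact hst.isFort_compl hne

/-- If the power domination process stalls without observing everything, the unobserved
vertices form a fort. -/
theorem stmt_17 {V : Type*} (G : SimpleGraph V) (A O : Set V) (h : Observes G A O)
    (hst : Stalled G O) (hne : O ≠ Set.univ) :
    IsFort G (Set.univ \ O) :=
  stmt_17_general G O hst hne
end
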